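/- Let δ, δ' > 0, α, α' ∈ (0,1], p, p' ∈ (0,1). For λ, u, v ∈ ℝ define the complex number 2π·h_{δ,α,p}(λ;u,v) = −exp(−δ(p^α + 1)·[(1 − e^{iu})^α + (1 − e^{iv})^α])·(2cos λ + 1) + exp(−δ(p^α + 1)·(1 − e^{i(u+v)})^α) + exp(−δ·[p^α(1 − e^{iv})^α + (1 − e^{iv}(1 − p + p·e^{iu}))^α + (1 − e^{iu})^α])·e^{−iλ} + exp(−δ·[p^α(1 − e^{iu})^α + (1 − e^{iu}(1 − p + p·e^{iv}))^α + (1 − e^{iv})^α])·e^{iλ}, where z^α denotes the principal complex power exp(α·Log z) with Log the principal logarithm. If h_{δ,α,p}(λ;u,v) = h_{δ',α',p'}(λ;u,v) for all λ, u, v ∈ ℝ, then δ = δ', α = α', and p = p'. -/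

import Mathlib

open Real

/-- The generalized spectrum of the integer-valued MA(1) model with binomial
thinning parameter `p` and discrete stable innovations with scale `δ` and
exponent `α`.  Complex powers `z ^ (α : ℂ)` are principal powers. -/
noncomputable def inmaSpec (δ α p : ℝ) (lam u v : ℝ) : ℂ :=
  (1 / (2 * Real.pi)) *
    ( -Complex.exp (-(δ : ℂ) * (((p ^ α : ℝ) : ℂ) + 1) *
          ((1 - Complex.exp ((u : ℂ) * Complex.I)) ^ (α : ℂ) +
           (1 - Complex.exp ((v : ℂ) * Complex.I)) ^ (α : ℂ))) *
        ((2 * Real.cos lam + 1 : ℝ) : ℂ)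
      + Complex.exp (-(δ : ℂ) * (((p ^ α : ℝ) : ℂ) + 1) *
          (1 - Complex.exp (((u + v : ℝ) : ℂ) * Complex.I)) ^ (α : ℂ))
      + Complex.exp (-(δ : ℂ) *
          (((p ^ α : ℝ) : ℂ) * (1 - Complex.exp ((v : ℂ) * Complex.I)) ^ (α : ℂ) +
           (1 - Complex.exp ((v : ℂ) * Complex.I) *
              (1 - (p : ℂ) + (p : ℂ) * Complex.exp ((u : ℂ) * Complex.I))) ^ (α : ℂ) +
           (1 - Complex.exp ((u : ℂ) * Complex.I)) ^ (α : ℂ))) *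
          Complex.exp (-(lam : ℂ) * Complex.I)
      + Complex.exp (-(δ : ℂ) *
          (((p ^ α : ℝ) : ℂ) * (1 - Complex.exp ((u : ℂ) * Complex.I)) ^ (α : ℂ) +
           (1 - Complex.exp ((u : ℂ) * Complex.I) *
              (1 - (p : ℂ) + (p : ℂ) * Complex.exp ((v : ℂ) * Complex.I))) ^ (α : ℂ) +
           (1 - Complex.exp ((v : ℂ) * Complex.I)) ^ (α : ℂ))) *
          Complex.exp ((lam : ℂ) * Complex.I) )

/-!
On the anti-diagonal `v = -u` the second exponential equals `1`, and with `z = (1 - e^{iu})^α`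
(so that `(1 - e^{-iu})^α = conj z`) and `q = p^α + (1 - p)^α`, `2π h` becomes
`1 - A (2 cos λ + 1) + B e^{-iλ} + conj B e^{iλ}`, where `A = exp (-δ (p^α + 1) (z + conj z))` and
`B = exp (-δ (q conj z + z))`. The values at `λ = 0, π, π/2` recover `A` and `B`, hence
`δ (p^α + 1) Re z`, `δ (q + 1) Re z`, and `δ (q - 1) Im z` up to a multiple of `2π`.

Since `Re z = (2 sin (u/2))^α cos (α (u - π)/2)`, letting `u → 0⁺` forces `α = α'`. At `u = π`,
`Re z = 2^α`, which identifies `δ (p^α + 1)` and `δ (q + 1)`; as `Im z → 0` without vanishing, the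
`2π`-ambiguity disappears and `δ (q - 1)` is identified as well. These three numbers determine `δ`
and then `p`.
-/

open Complex ComplexConjugate Filter Topology Set

theorem two_mul_sin_half_pos {u : ℝ} (hu : u ∈ Ioo 0 (2 * π)) : 0 < 2 * Real.sin (u / 2) := by
  have := Real.sin_pos_of_pos_of_lt_pi (x := u / 2) (by linarith [hu.1]) (by linarith [hu.2])
  linarith

namespace Complex

theorem one_sub_exp_ofReal_mul_I (u : ℝ) :
    1 - exp (u * I) = ((2 * Real.sin (u / 2) : ℝ) : ℂ) * exp (((u - π) / 2 : ℝ) * I) := by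
  have hsin : ((Real.sin (u / 2) : ℝ) : ℂ) = (exp (-(u / 2) * I) - exp (u / 2 * I)) * I / 2 := by
    rw [ofReal_sin, sin]; push_cast; ring_nf
  have hhalf : exp (((u - π) / 2 : ℝ) * I) = exp (u / 2 * I) * -I := by
    rw [show (((u - π) / 2 : ℝ) : ℂ) * I = u / 2 * I + -(π / 2 * I) by push_cast; ring,
      exp_add, exp_neg, exp_pi_div_two_mul_I, inv_I]
  have hsq : exp (u / 2 * I) * exp (u / 2 * I) = exp (u * I) := by
    rw [← exp_add]; ring_nf
  have hinv : exp (-(u / 2) * I) * exp (u / 2 * I) = 1 := by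
    rw [← exp_add, ← exp_zero]; ring_nf
  rw [hhalf, ofReal_mul, hsin]
  push_cast
  linear_combination hsq - hinv +
    (exp (-(u / 2) * I) * exp (u / 2 * I) - exp (u / 2 * I) * exp (u / 2 * I)) * I_sq

theorem norm_one_sub_exp_ofReal_mul_I {u : ℝ} (hu : u ∈ Icc 0 (2 * π)) :
    ‖1 - exp (u * I)‖ = 2 * Real.sin (u / 2) := by
  have : 0 ≤ Real.sin (u / 2) :=
    Real.sin_nonneg_of_nonneg_of_le_pi (by linarith [hu.1]) (by linarith [hu.2])
  rw [one_sub_exp_ofReal_mul_I, norm_mul, norm_exp_ofReal_mul_I, norm_real,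
    Real.norm_of_nonneg (by linarith), mul_one]

theorem arg_one_sub_exp_ofReal_mul_I {u : ℝ} (hu : u ∈ Ioo 0 (2 * π)) :
    arg (1 - exp (u * I)) = (u - π) / 2 := by
  rw [one_sub_exp_ofReal_mul_I, exp_mul_I, arg_mul_cos_add_sin_mul_I (two_mul_sin_half_pos hu)]
  constructor <;> linarith [hu.1, hu.2, Real.pi_pos]

theorem arg_one_sub_exp_ofReal_mul_I_ne_pi (u : ℝ) : arg (1 - exp (u * I)) ≠ π := by
  rw [Ne, arg_eq_pi_iff, sub_re, one_re, exp_ofReal_mul_I_re, not_and]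
  exact fun h => absurd h (not_lt.2 (sub_nonneg.2 (Real.cos_le_one u)))

theorem ofReal_mul_cpow_ofReal {r : ℝ} (hr : 0 < r) (w : ℂ) (a : ℝ) :
    ((r : ℂ) * w) ^ (a : ℂ) = ((r ^ a : ℝ) : ℂ) * w ^ (a : ℂ) := by
  rw [cpow_ofReal, cpow_ofReal, norm_mul, norm_real, Real.norm_of_nonneg hr.le,
    Real.mul_rpow hr.le (norm_nonneg w)]
  rcases eq_or_ne w 0 with rfl | hw
  · simp
  rw [arg_real_mul _ hr]; push_cast; ring

theorem re_eq_and_exists_im_of_exp_eq {x y : ℂ} (h : exp x = exp y) :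
    x.re = y.re ∧ ∃ n : ℤ, x.im = y.im + n * (2 * π) := by
  obtain ⟨n, hn⟩ := exp_eq_exp_iff_exists_int.1 h
  exact ⟨by simpa using congrArg re hn, n, by simpa using congrArg im hn⟩

end Complex

theorem eq_zero_of_eventually_mul_eq_int_mul {ι : Type*} {l : Filter ι} [l.NeBot] {f : ι → ℝ}
    {K T : ℝ} (hT : T ≠ 0) (hf : Tendsto f l (𝓝 0)) (hne : ∀ᶠ x in l, f x ≠ 0)
    (hK : ∀ᶠ x in l, ∃ n : ℤ, K * f x = n * T) : K = 0 := by
  have hsmall : ∀ᶠ x in l, |K * f x| < |T| := by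
    have := (hf.const_mul K).abs
    rw [mul_zero, abs_zero] at this
    exact this.eventually (gt_mem_nhds (abs_pos.2 hT))
  obtain ⟨x, hfx, ⟨n, hn⟩, hlt⟩ := (hne.and (hK.and hsmall)).exists
  have hn0 : n = 0 := by
    rw [hn, abs_mul, ← Int.cast_abs] at hlt
    have : |n| < 1 := by exact_mod_cast (mul_lt_iff_lt_one_left (abs_pos.2 hT)).1 hlt
    exact Int.abs_lt_one_iff.1 this
  rw [hn0, Int.cast_zero, zero_mul] at hn
  exact (mul_eq_zero.1 hn).resolve_right hfx

theorem eq_of_forall_trig_eq {a b c a' b' c' : ℂ}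
    (h : ∀ lam : ℝ, -a * ((2 * Real.cos lam + 1 : ℝ) : ℂ) + b * exp (-lam * I) + c * exp (lam * I) =
      -a' * ((2 * Real.cos lam + 1 : ℝ) : ℂ) + b' * exp (-lam * I) + c' * exp (lam * I)) :
    a = a' ∧ b = b' := by
  have h0 := h 0
  have hπ := h π
  have hπ2 := h (π / 2)
  simp only [Real.cos_zero, Real.cos_pi, Real.cos_pi_div_two, ofReal_zero, neg_zero, zero_mul,
    Complex.exp_zero, neg_mul, exp_pi_mul_I, ofReal_div, ofReal_ofNat, exp_pi_div_two_mul_I,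
    Complex.exp_neg, inv_I] at h0 hπ hπ2
  push_cast at h0 hπ hπ2
  have ha : a = a' := by linear_combination (-1 / 2 : ℂ) * (h0 + hπ)
  refine ⟨ha, ?_⟩
  linear_combination (1 / 4 : ℂ) * (h0 - hπ) + I / 2 * hπ2 + (1 + I / 2) * ha +
    (b - b' - c + c') / 2 * I_sq

/-- `E e^{iuε} = exp (-δ * stableExponent α u)` for the discrete stable innovations `ε`. -/
noncomputable def stableExponent (α u : ℝ) : ℂ := (1 - exp (u * I)) ^ (α : ℂ)

theorem stableExponent_zero {α : ℝ} (hα : α ≠ 0) : stableExponent α 0 = 0 := by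
  simp [stableExponent, hα]

theorem stableExponent_neg (α u : ℝ) : stableExponent α (-u) = conj (stableExponent α u) := by
  rw [stableExponent, stableExponent, ← conj_ofReal α,
    ← conj_cpow _ _ (arg_one_sub_exp_ofReal_mul_I_ne_pi u), conj_ofReal, map_sub, map_one,
    ← exp_conj, map_mul, conj_ofReal, conj_I]
  push_cast; ring_nf

theorem re_stableExponent (α : ℝ) {u : ℝ} (hu : u ∈ Ioo 0 (2 * π)) :
    (stableExponent α u).re = (2 * Real.sin (u / 2)) ^ α * Real.cos ((u - π) / 2 * α) := by
  rw [stableExponent, cpow_ofReal_re, norm_one_sub_exp_ofReal_mul_I (Ioo_subset_Icc_self hu),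
    arg_one_sub_exp_ofReal_mul_I hu]

theorem im_stableExponent (α : ℝ) {u : ℝ} (hu : u ∈ Ioo 0 (2 * π)) :
    (stableExponent α u).im = (2 * Real.sin (u / 2)) ^ α * Real.sin ((u - π) / 2 * α) := by
  rw [stableExponent, cpow_ofReal_im, norm_one_sub_exp_ofReal_mul_I (Ioo_subset_Icc_self hu),
    arg_one_sub_exp_ofReal_mul_I hu]

theorem re_stableExponent_pi (α : ℝ) : (stableExponent α π).re = 2 ^ α := by
  rw [re_stableExponent α ⟨Real.pi_pos, by linarith [Real.pi_pos]⟩]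
  simp

theorem im_stableExponent_neg {α u : ℝ} (hα : α ∈ Ioc 0 2) (hu : u ∈ Ioo 0 π) :
    (stableExponent α u).im < 0 := by
  have hu' : u ∈ Ioo 0 (2 * π) := ⟨hu.1, by linarith [hu.2, Real.pi_pos]⟩
  rw [im_stableExponent α hu']
  refine mul_neg_of_pos_of_neg (Real.rpow_pos_of_pos (two_mul_sin_half_pos hu') α)
    (Real.sin_neg_of_neg_of_neg_pi_lt ?_ ?_)
  · exact mul_neg_of_neg_of_pos (by linarith [hu.2]) hα.1
  · nlinarith [hu.1, hα.1, hα.2, Real.pi_pos]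

theorem tendsto_stableExponent_zero {α : ℝ} (hα : 0 < α) :
    Tendsto (stableExponent α) (𝓝 0) (𝓝 0) := by
  have hcont : ContinuousAt (stableExponent α) 0 :=
    (continuousAt_cpow_zero_of_re_pos (z := α) (by simpa using hα)).comp_of_eq
      (f := fun u : ℝ => (1 - exp (u * I), (α : ℂ))) (by fun_prop) (by simp)
  simpa [stableExponent_zero hα.ne'] using hcont.tendsto

theorem eq_zero_of_mul_re_stableExponent_eq {α α' c c' : ℝ} (hα : α ∈ Ioo (-1) 1) (hlt : α < α')
    (h : ∀ u ∈ Ioo 0 π, c * (stableExponent α u).re = c' * (stableExponent α' u).re) : c = 0 := by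
  -- Divided by `(2 sin (u/2))^α`, the left side tends to `c cos (απ/2)` and the right side to `0`.
  have hcancel : ∀ u ∈ Ioo 0 π, c * Real.cos ((u - π) / 2 * α) =
      c' * (2 * Real.sin (u / 2)) ^ (α' - α) * Real.cos ((u - π) / 2 * α') := by
    intro u hu
    have hu' : u ∈ Ioo 0 (2 * π) := ⟨hu.1, by linarith [hu.2, Real.pi_pos]⟩
    have hs := two_mul_sin_half_pos hu'
    have hu_eq := h u hu
    rw [re_stableExponent α hu', re_stableExponent α' hu',
      ← add_sub_cancel α α', Real.rpow_add hs, add_sub_cancel] at hu_eq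
    apply mul_left_cancel₀ (Real.rpow_pos_of_pos hs α).ne'
    linear_combination hu_eq
  have hlhs : Tendsto (fun u => c * Real.cos ((u - π) / 2 * α)) (𝓝[>] 0)
      (𝓝 (c * Real.cos ((0 - π) / 2 * α))) :=
    ((by fun_prop : Continuous fun u => c * Real.cos ((u - π) / 2 * α)).tendsto 0).mono_left
      nhdsWithin_le_nhds
  have hrhs : Tendsto
      (fun u => c' * (2 * Real.sin (u / 2)) ^ (α' - α) * Real.cos ((u - π) / 2 * α'))
      (𝓝[>] 0) (𝓝 0) := by
    have hpow : Tendsto (fun u : ℝ => (2 * Real.sin (u / 2)) ^ (α' - α)) (𝓝 0) (𝓝 0) := by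
      have := ((by fun_prop : Continuous fun u : ℝ => 2 * Real.sin (u / 2)).tendsto 0).rpow_const
        (Or.inr (sub_pos.2 hlt).le)
      simpa [Real.zero_rpow (sub_pos.2 hlt).ne'] using this
    have := (hpow.const_mul c').mul
      ((by fun_prop : Continuous fun u => Real.cos ((u - π) / 2 * α')).tendsto 0)
    simpa using this.mono_left nhdsWithin_le_nhds
  have hlim := tendsto_nhds_unique
    (hlhs.congr' (eventually_of_mem (Ioo_mem_nhdsGT Real.pi_pos) hcancel)) hrhs
  have hcos : 0 < Real.cos ((0 - π) / 2 * α) := by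
    apply Real.cos_pos_of_mem_Ioo
    constructor <;> nlinarith [hα.1, hα.2, Real.pi_pos]
  exact (mul_eq_zero.1 hlim).resolve_right hcos.ne'

theorem eq_of_mul_re_stableExponent_eq {α α' c c' : ℝ} (hα : α ∈ Ioc (-1) 1)
    (hα' : α' ∈ Ioc (-1) 1) (hc : c ≠ 0) (hc' : c' ≠ 0)
    (h : ∀ u ∈ Ioo 0 π, c * (stableExponent α u).re = c' * (stableExponent α' u).re) : α = α' := by
  rcases lt_trichotomy α α' with hlt | heq | hgt
  · exact absurd (eq_zero_of_mul_re_stableExponent_eq ⟨hα.1, hlt.trans_le hα'.2⟩ hlt h) hc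
  · exact heq
  · exact absurd (eq_zero_of_mul_re_stableExponent_eq ⟨hα'.1, hgt.trans_le hα.2⟩ hgt
      fun u hu => (h u hu).symm) hc'

theorem eq_of_mul_im_stableExponent_eq_add_int_mul {α K K' : ℝ} (hα : α ∈ Ioc 0 2)
    (h : ∀ u ∈ Ioo 0 π, ∃ n : ℤ,
      K * (stableExponent α u).im = K' * (stableExponent α u).im + n * (2 * π)) : K = K' := by
  have him : Tendsto (fun u => (stableExponent α u).im) (𝓝[>] 0) (𝓝 0) := by
    simpa [Function.comp_def] using
      ((continuous_im.tendsto 0).comp (tendsto_stableExponent_zero hα.1)).mono_left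
        nhdsWithin_le_nhds
  have hnear : ∀ᶠ u in 𝓝[>] (0 : ℝ), u ∈ Ioo 0 π := Ioo_mem_nhdsGT Real.pi_pos
  refine sub_eq_zero.1 (eq_zero_of_eventually_mul_eq_int_mul Real.two_pi_pos.ne' him
    (hnear.mono fun u hu => (im_stableExponent_neg hα hu).ne) (hnear.mono fun u hu => ?_))
  obtain ⟨n, hn⟩ := h u hu
  exact ⟨n, by linear_combination hn⟩

theorem one_sub_exp_mul_one_sub_add_mul_exp (p u : ℝ) :
    1 - exp (u * I) * (1 - p + p * exp (((-u : ℝ) : ℂ) * I)) =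
      ((1 - p : ℝ) : ℂ) * (1 - exp (u * I)) := by
  have h : exp (u * I) * exp (-u * I) = 1 := by
    rw [← Complex.exp_add, ← Complex.exp_zero]; ring_nf
  push_cast
  linear_combination -(p : ℂ) * h

theorem inmaSpec_self_neg (δ α p lam u : ℝ) (hα : α ≠ 0) (hp : p < 1) :
    inmaSpec δ α p lam u (-u) = (1 / (2 * π)) * (1 +
      (-exp (-δ * ((p ^ α : ℝ) + 1) * (stableExponent α u + conj (stableExponent α u))) *
          ((2 * Real.cos lam + 1 : ℝ) : ℂ)
        + exp (-δ * ((p ^ α + (1 - p) ^ α : ℝ) * conj (stableExponent α u) +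
            stableExponent α u)) * exp (-lam * I)
        + exp (-δ * ((p ^ α + (1 - p) ^ α : ℝ) * stableExponent α u +
            conj (stableExponent α u))) * exp (lam * I))) := by
  have hthin := one_sub_exp_mul_one_sub_add_mul_exp p u
  have hthin' := one_sub_exp_mul_one_sub_add_mul_exp p (-u)
  rw [neg_neg] at hthin'
  have hz : (1 - exp (u * I)) ^ (α : ℂ) = stableExponent α u := rfl
  have hz' : (1 - exp (((-u : ℝ) : ℂ) * I)) ^ (α : ℂ) = conj (stableExponent α u) :=
    stableExponent_neg α u
  rw [inmaSpec, hthin, hthin', ofReal_mul_cpow_ofReal (sub_pos.2 hp),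
    ofReal_mul_cpow_ofReal (sub_pos.2 hp), hz, hz', add_neg_cancel, ofReal_zero, zero_mul,
    Complex.exp_zero, sub_self, zero_cpow (ofReal_ne_zero.2 hα), mul_zero, Complex.exp_zero]
  push_cast
  ring_nf

theorem stableExponent_relations_of_inmaSpec_eq {δ δ' α α' p p' u : ℝ} (hα : α ≠ 0)
    (hα' : α' ≠ 0) (hp : p < 1) (hp' : p' < 1)
    (h : ∀ lam : ℝ, inmaSpec δ α p lam u (-u) = inmaSpec δ' α' p' lam u (-u)) :
    δ * (p ^ α + 1) * (stableExponent α u).re = δ' * (p' ^ α' + 1) * (stableExponent α' u).re ∧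
    δ * (p ^ α + (1 - p) ^ α + 1) * (stableExponent α u).re =
      δ' * (p' ^ α' + (1 - p') ^ α' + 1) * (stableExponent α' u).re ∧
    ∃ n : ℤ, δ * (p ^ α + (1 - p) ^ α - 1) * (stableExponent α u).im =
      δ' * (p' ^ α' + (1 - p') ^ α' - 1) * (stableExponent α' u).im + n * (2 * π) := by
  have h2π : (1 / (2 * π) : ℂ) ≠ 0 := by simp [Real.pi_ne_zero]
  obtain ⟨ha, hb⟩ := eq_of_forall_trig_eq fun lam => add_left_cancel <| mul_left_cancel₀ h2π <|
    (inmaSpec_self_neg δ α p lam u hα hp).symm.trans <|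
      (h lam).trans (inmaSpec_self_neg δ' α' p' lam u hα' hp')
  obtain ⟨ha, -⟩ := re_eq_and_exists_im_of_exp_eq ha
  obtain ⟨hb_re, n, hb_im⟩ := re_eq_and_exists_im_of_exp_eq hb
  simp only [neg_mul, neg_re, mul_re, ofReal_re, add_re, one_re, ofReal_im, add_im, one_im,
    add_zero, mul_zero, sub_zero, conj_re, mul_im, zero_mul, conj_im, add_neg_cancel, neg_inj,
    ofReal_add, mul_neg, neg_zero, neg_im] at ha hb_re hb_im
  exact ⟨by linarith, by linarith, n, by linarith⟩

/-- Identifiability of the integer-valued MA(1) model with discrete stable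
innovations from its generalized spectrum. -/
theorem inma_identifiable (δ δ' α α' p p' : ℝ)
    (hδ : 0 < δ) (hδ' : 0 < δ')
    (hα : α ∈ Set.Ioc (0 : ℝ) 1) (hα' : α' ∈ Set.Ioc (0 : ℝ) 1)
    (hp : p ∈ Set.Ioo (0 : ℝ) 1) (hp' : p' ∈ Set.Ioo (0 : ℝ) 1)
    (h : ∀ lam u v : ℝ, inmaSpec δ α p lam u v = inmaSpec δ' α' p' lam u v) :
    δ = δ' ∧ α = α' ∧ p = p' := by
  have key u := stableExponent_relations_of_inmaSpec_eq hα.1.ne' hα'.1.ne' hp.2 hp'.2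
    fun lam => h lam u (-u)
  obtain rfl : α = α' := eq_of_mul_re_stableExponent_eq ⟨by linarith [hα.1], hα.2⟩
    ⟨by linarith [hα'.1], hα'.2⟩ (mul_pos hδ (add_pos (Real.rpow_pos_of_pos hp.1 α) one_pos)).ne'
    (mul_pos hδ' (add_pos (Real.rpow_pos_of_pos hp'.1 α') one_pos)).ne' fun u _ => (key u).1
  have hre_pi : (stableExponent α π).re ≠ 0 := by rw [re_stableExponent_pi]; positivity
  have hscale := mul_right_cancel₀ hre_pi (key π).1
  have hsum := mul_right_cancel₀ hre_pi (key π).2.1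
  have hdiff := eq_of_mul_im_stableExponent_eq_add_int_mul ⟨hα.1, by linarith [hα.2]⟩
    fun u _ => (key u).2.2
  obtain rfl : δ = δ' := by linear_combination (hsum - hdiff) / 2
  have hpow : p ^ α = p' ^ α := by simpa using mul_left_cancel₀ hδ.ne' hscale
  exact ⟨rfl, rfl, (Real.rpow_left_inj hp.1.le hp'.1.le hα.1.ne').1 hpow⟩
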